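/- arXiv:2102.10851 — 2 statements merged into one kernel-verified Lean document; each statement's English description precedes it below -/
import Mathlib

section
/- For every natural number n ≥ 1, φ(n, n−1, 0) = 1/(2n)! and φ(n, n, 1) = 1/(2n+1)!. -/
/-- Auxiliary array realizing the triangular field `φ` on natural-number indices. -/
def phiN : ℕ → ℕ → ℕ → ℚ
  | 0, j, k => if j = 0 ∧ k = 0 then 1 else 0
  | n + 1, j, k =>
    if k ≤ j ∧ j ≤ n + 1 then
      ((if _hk : k = 0 then 0 else ((n : ℚ) + 2 - (j : ℚ)) * phiN (n + 1) (j - 1) (k - 1))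
        + ((k : ℚ) + 1) * phiN n j (k + 1) + phiN n j k) / (2 * ((n : ℚ) + 1) + (k : ℚ))
    else 0
termination_by n j k => (n, j)

/-- The triangular field `φ(n,j,k)` of rational numbers: `φ(n,j,k) = 0` unless
`0 ≤ k ≤ j ≤ n`, `φ(0,0,0) = 1`, and for `0 ≤ k ≤ j ≤ n` with `(n,j,k) ≠ (0,0,0)`,
`(2n+k)·φ(n,j,k) = (n-j+1)·φ(n,j-1,k-1) + (k+1)·φ(n-1,j,k+1) + φ(n-1,j,k)`. -/
def phi (n j k : ℤ) : ℚ :=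
  if 0 ≤ n ∧ 0 ≤ j ∧ 0 ≤ k then phiN n.toNat j.toNat k.toNat else 0

/-!
Along the two outermost diagonals the recurrence collapses: `φ(n+1, n, 0)` only sees
`φ(n, n, 1) + φ(n, n, 0)`, and `φ(n+1, n+1, 1)` only sees `φ(n+1, n, 0)`, each divided by the
next factor `2n+2`, resp. `2n+3`, of the factorial. Since `φ(n, n, 0)` vanishes for `n ≥ 1`
and `φ(0,0,0) = 1`, the sum `φ(n, n, 1) + φ(n, n, 0)` equals `1/(2n+1)!` for every `n`.
-/

theorem phi_natCast (n j k : ℕ) : phi n j k = phiN n j k := by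
  simp [phi]

theorem phiN_eq_zero_of_lt {n j : ℕ} (k : ℕ) (h : n < j) : phiN n j k = 0 := by
  cases n <;> rw [phiN, if_neg (by omega)]

theorem phiN_succ_succ_zero (n : ℕ) : phiN (n + 1) (n + 1) 0 = 0 := by
  rw [phiN, if_pos (by omega), dif_pos rfl, phiN_eq_zero_of_lt 1 (Nat.lt_succ_self n),
    phiN_eq_zero_of_lt 0 (Nat.lt_succ_self n)]
  simp

theorem phiN_succ_zero_eq_diag (n : ℕ) :
    phiN (n + 1) n 0 = (phiN n n 1 + phiN n n 0) / (2 * n + 2) := by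
  rw [phiN, if_pos (by omega), dif_pos rfl]
  push_cast
  ring_nf

theorem phiN_succ_succ_one_eq (n : ℕ) :
    phiN (n + 1) (n + 1) 1 = phiN (n + 1) n 0 / (2 * n + 3) := by
  rw [phiN, if_pos (by omega), dif_neg one_ne_zero, phiN_eq_zero_of_lt 2 (Nat.lt_succ_self n),
    phiN_eq_zero_of_lt 1 (Nat.lt_succ_self n)]
  simp only [Nat.add_sub_cancel, Nat.sub_self]
  push_cast
  ring_nf

theorem factorial_two_mul_succ (n : ℕ) :
    ((2 * (n + 1)).factorial : ℚ) = (2 * n + 2) * (2 * n + 1).factorial := by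
  rw [show 2 * (n + 1) = 2 * n + 1 + 1 by ring, Nat.factorial_succ]
  push_cast
  ring

theorem factorial_two_mul_succ_add_one (n : ℕ) :
    ((2 * (n + 1) + 1).factorial : ℚ) = (2 * n + 3) * (2 * (n + 1)).factorial := by
  rw [Nat.factorial_succ]
  push_cast
  ring

theorem phiN_succ_zero_of_diag {n : ℕ}
    (h : phiN n n 1 + phiN n n 0 = 1 / ((2 * n + 1).factorial : ℚ)) :
    phiN (n + 1) n 0 = 1 / ((2 * (n + 1)).factorial : ℚ) := by
  rw [phiN_succ_zero_eq_diag, h, factorial_two_mul_succ]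
  field_simp

theorem phiN_succ_succ_one_of_diag {n : ℕ}
    (h : phiN n n 1 + phiN n n 0 = 1 / ((2 * n + 1).factorial : ℚ)) :
    phiN (n + 1) (n + 1) 1 = 1 / ((2 * (n + 1) + 1).factorial : ℚ) := by
  rw [phiN_succ_succ_one_eq, phiN_succ_zero_of_diag h, factorial_two_mul_succ_add_one]
  field_simp

theorem phiN_self_one_add_self_zero (n : ℕ) :
    phiN n n 1 + phiN n n 0 = 1 / ((2 * n + 1).factorial : ℚ) := by
  induction n with
  | zero => simp [phiN]
  | succ n ih => rw [phiN_succ_succ_one_of_diag ih, phiN_succ_succ_zero, add_zero]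

/-- For `n ≥ 1`: `φ(n, n-1, 0) = 1/(2n)!` and `φ(n, n, 1) = 1/(2n+1)!`. -/
theorem stmt12 (n : ℕ) (hn : 1 ≤ n) :
    phi (n : ℤ) ((n : ℤ) - 1) 0 = 1 / (Nat.factorial (2 * n) : ℚ)
      ∧ phi (n : ℤ) (n : ℤ) 1 = 1 / (Nat.factorial (2 * n + 1) : ℚ) := by
  obtain ⟨m, rfl⟩ := Nat.exists_eq_add_of_le' hn
  have hdiag := phiN_self_one_add_self_zero m
  refine ⟨?_, ?_⟩
  · rw [show ((m + 1 : ℕ) : ℤ) - 1 = (m : ℕ) by push_cast; ring]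
    exact_mod_cast (phi_natCast (m + 1) m 0).trans (phiN_succ_zero_of_diag hdiag)
  · exact_mod_cast (phi_natCast (m + 1) (m + 1) 1).trans (phiN_succ_succ_one_of_diag hdiag)
end

section
/- For all natural numbers s and n, Σ_{j=0}^{n} (s)_{n−j} · φ(n,j,0) = (1/(2n)!) · iteratedDeriv (2n) (fun t : ℝ => (cosh t)^s) 0, as an identity of real numbers. -/
open Finset Nat

lemma phiN_eq_zero {n j k : ℕ} (h : ¬(k ≤ j ∧ j ≤ n)) : phiN n j k = 0 := by
  cases n with
  | zero => rw [phiN, if_neg (by omega)]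
  | succ n => rw [phiN, if_neg h]

lemma phiN_succ (n j k : ℕ) :
    (2 * ((n : ℚ) + 1) + k) * phiN (n + 1) j k =
      (if j = 0 ∨ k = 0 then 0 else ((n : ℚ) + 2 - j) * phiN (n + 1) (j - 1) (k - 1))
        + ((k : ℚ) + 1) * phiN n j (k + 1) + phiN n j k := by
  by_cases hjk : k ≤ j ∧ j ≤ n + 1
  · rw [phiN, if_pos hjk, mul_div_cancel₀ _ (by positivity)]
    rcases Nat.eq_zero_or_pos k with rfl | hk
    · simp
    · rw [dif_neg (by omega), if_neg (by omega)]
  · rw [phiN_eq_zero hjk, mul_zero, phiN_eq_zero (n := n) (j := j) (k := k + 1) (by omega),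
      phiN_eq_zero (n := n) (j := j) (k := k) (by omega)]
    split_ifs
    · ring
    · -- outside the triangle the first term survives only at `j = n + 2`, where its weight vanishes
      rcases (by omega : j = n + 2 ∨ ¬(k - 1 ≤ j - 1 ∧ j - 1 ≤ n + 1)) with rfl | hj
      · push_cast; ring
      · rw [phiN_eq_zero hj]; ring

lemma Nat.descFactorial_succ_eq_mul_pred (s p : ℕ) :
    s.descFactorial (p + 1) = s * (s - 1).descFactorial p := by
  cases s with
  | zero => simp
  | succ s => exact succ_descFactorial_succ s p

lemma Nat.succ_descFactorial_succ_eq_add (s p : ℕ) :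
    (s + 1).descFactorial (p + 1) = (p + 1) * s.descFactorial p + s.descFactorial (p + 1) := by
  rw [succ_descFactorial_succ, descFactorial_succ]
  rcases Nat.lt_or_ge s p with h | h
  · simp [descFactorial_eq_zero_iff_lt.mpr h]
  · rw [← add_mul]; congr 1; omega

def phiSum (s n k : ℕ) : ℚ :=
  ∑ j ∈ range (n + 1), (s.descFactorial (n - j) : ℚ) * phiN n j k

lemma phiSum_zero_left (s k : ℕ) : phiSum s 0 k = phiN 0 0 k := by
  simp [phiSum]

lemma sum_descFactorial_mul_phiN (s n k : ℕ) :
    ∑ j ∈ range (n + 2), (s.descFactorial (n + 1 - j) : ℚ) * phiN n j k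
      = s * phiSum (s - 1) n k := by
  rw [sum_range_succ, phiN_eq_zero (by omega), mul_zero, add_zero, phiSum, mul_sum]
  refine sum_congr rfl fun j hj => ?_
  rw [show n + 1 - j = n - j + 1 by have := mem_range.mp hj; omega,
    descFactorial_succ_eq_mul_pred]
  push_cast; ring

lemma sum_descFactorial_mul_phiN_pred (s n k : ℕ) :
    ∑ j ∈ range (n + 2), (s.descFactorial (n + 1 - j) : ℚ) *
        (if j = 0 then 0 else ((n : ℚ) + 2 - j) * phiN (n + 1) (j - 1) k)
      = phiSum (s + 1) (n + 1) k - phiSum s (n + 1) k := by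
  rw [phiSum, phiSum, ← sum_sub_distrib, sum_range_succ', sum_range_succ _ (n + 1)]
  simp only [Nat.add_one_ne_zero, ↓reduceIte, mul_zero, add_zero, Nat.sub_self,
    descFactorial_zero, sub_self]
  refine sum_congr rfl fun i hi => ?_
  have hi : i ≤ n := Nat.lt_succ_iff.mp (mem_range.mp hi)
  rw [Nat.add_sub_cancel, show n + 1 - i = n - i + 1 by omega,
    succ_descFactorial_succ_eq_add, show n + 1 - (i + 1) = n - i by omega]
  push_cast [Nat.cast_sub hi]; ring

lemma phiSum_succ (s n k : ℕ) :
    (2 * ((n : ℚ) + 1) + k) * phiSum s (n + 1) k =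
      s * ((k : ℚ) + 1) * phiSum (s - 1) n (k + 1) + s * phiSum (s - 1) n k
        + (if k = 0 then 0 else phiSum (s + 1) (n + 1) (k - 1) - phiSum s (n + 1) (k - 1)) := by
  have expand : (2 * ((n : ℚ) + 1) + k) * phiSum s (n + 1) k =
      ∑ j ∈ range (n + 2), (s.descFactorial (n + 1 - j) : ℚ) *
          (if j = 0 ∨ k = 0 then 0 else ((n : ℚ) + 2 - j) * phiN (n + 1) (j - 1) (k - 1))
        + ((k : ℚ) + 1) * ∑ j ∈ range (n + 2), (s.descFactorial (n + 1 - j) : ℚ) * phiN n j (k + 1)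
        + ∑ j ∈ range (n + 2), (s.descFactorial (n + 1 - j) : ℚ) * phiN n j k := by
    rw [phiSum, mul_sum, mul_sum, ← sum_add_distrib, ← sum_add_distrib]
    refine sum_congr rfl fun j _ => ?_
    rw [mul_left_comm, phiN_succ]; ring
  rw [expand, sum_descFactorial_mul_phiN, sum_descFactorial_mul_phiN]
  rcases k with _ | k
  · simp
  · simp only [Nat.add_one_ne_zero, or_false, if_false, Nat.add_sub_cancel,
      sum_descFactorial_mul_phiN_pred]
    ring

def coshSinhDeriv (s m k : ℕ) : ℚ :=
  if k ≤ m ∧ (m - k) % 2 = 0 then m ! * k ! * phiSum s ((m - k) / 2) k else 0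

lemma coshSinhDeriv_of_eq {s m k : ℕ} (n : ℕ) (h : m = 2 * n + k) :
    coshSinhDeriv s m k = m ! * k ! * phiSum s n k := by
  rw [coshSinhDeriv, if_pos ⟨by omega, by omega⟩,
    show (m - k) / 2 = n by omega]

lemma coshSinhDeriv_eq_zero {s m k : ℕ} (h : ¬(k ≤ m ∧ (m - k) % 2 = 0)) :
    coshSinhDeriv s m k = 0 := by
  rw [coshSinhDeriv, if_neg h]

lemma coshSinhDeriv_succ (s m k : ℕ) :
    coshSinhDeriv s (m + 1) k =
      s * coshSinhDeriv (s - 1) m (k + 1) + s * m * coshSinhDeriv (s - 1) (m - 1) k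
        + k * coshSinhDeriv (s + 1) m (k - 1) - k * coshSinhDeriv s m (k - 1) := by
  by_cases hc : k ≤ m + 1 ∧ (m + 1 - k) % 2 = 0
  · obtain ⟨n, hn⟩ : ∃ n, m + 1 = 2 * n + k := ⟨(m + 1 - k) / 2, by omega⟩
    rcases n with _ | n
    · obtain rfl : k = m + 1 := by omega
      rw [coshSinhDeriv_of_eq 0 (by ring), coshSinhDeriv_eq_zero (by omega),
        coshSinhDeriv_eq_zero (by omega), Nat.add_sub_cancel, coshSinhDeriv_of_eq 0 (by ring),
        coshSinhDeriv_of_eq (s := s) 0 (by ring), phiSum_zero_left, phiSum_zero_left,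
        phiSum_zero_left, phiN_eq_zero (by omega)]
      ring
    · have hk : (k : ℚ) * coshSinhDeriv (s + 1) m (k - 1) - k * coshSinhDeriv s m (k - 1)
          = m ! * k ! * (if k = 0 then 0
              else phiSum (s + 1) (n + 1) (k - 1) - phiSum s (n + 1) (k - 1)) := by
        rcases k with _ | k
        · simp
        · rw [if_neg (by omega), Nat.add_sub_cancel, coshSinhDeriv_of_eq (n + 1) (by omega),
            coshSinhDeriv_of_eq (n + 1) (by omega), factorial_succ]
          push_cast; ring
      have hfac : (m : ℚ) * (m - 1)! = m ! := by exact_mod_cast mul_factorial_pred (by omega)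
      have hm : (m : ℚ) + 1 = 2 * ((n : ℚ) + 1) + k := by exact_mod_cast hn
      rw [coshSinhDeriv_of_eq (n + 1) hn, coshSinhDeriv_of_eq n (by omega),
        coshSinhDeriv_of_eq n (by omega), add_sub_assoc, hk, factorial_succ, factorial_succ]
      push_cast
      linear_combination (m ! : ℚ) * k ! * phiSum_succ s n k
        + (m ! : ℚ) * k ! * phiSum s (n + 1) k * hm - s * k ! * phiSum (s - 1) n k * hfac
  · rw [coshSinhDeriv_eq_zero hc, coshSinhDeriv_eq_zero (by omega)]
    have hm : (m : ℚ) * coshSinhDeriv (s - 1) (m - 1) k = 0 := by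
      rcases m with _ | m
      · simp
      · rw [coshSinhDeriv_eq_zero (by omega), mul_zero]
    have hk : ∀ s', (k : ℚ) * coshSinhDeriv s' m (k - 1) = 0 := by
      intro s'
      rcases k with _ | k
      · simp
      · rw [coshSinhDeriv_eq_zero (by omega), mul_zero]
    linear_combination -(s : ℚ) * hm - hk (s + 1) + hk s

lemma iteratedDeriv_fun_id_mul_zero {𝕜 : Type*} [NontriviallyNormedField 𝕜] {h : 𝕜 → 𝕜}
    {m : ℕ} (hh : ContDiffAt 𝕜 m h 0) :
    iteratedDeriv m (fun u => u * h u) 0 = m * iteratedDeriv (m - 1) h 0 := by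
  rw [iteratedDeriv_fun_mul (f := fun u => u) contDiffAt_id hh]
  simp +contextual [iteratedDeriv_fun_id_zero]

open Real

noncomputable def coshSinh (s k : ℕ) (u : ℝ) : ℝ :=
  cosh u ^ s * (sinh u - u) ^ k

@[fun_prop]
lemma contDiff_coshSinh {n : WithTop ℕ∞} (s k : ℕ) : ContDiff ℝ n (coshSinh s k) := by
  unfold coshSinh
  fun_prop

lemma hasDerivAt_coshSinh (s k : ℕ) (u : ℝ) :
    HasDerivAt (coshSinh s k)
      (s * coshSinh (s - 1) (k + 1) u + s * (u * coshSinh (s - 1) k u)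
        + k * coshSinh (s + 1) (k - 1) u - k * coshSinh s (k - 1) u) u := by
  have h : HasDerivAt (coshSinh s k) (s * cosh u ^ (s - 1) * sinh u * (sinh u - u) ^ k
      + cosh u ^ s * (k * (sinh u - u) ^ (k - 1) * (cosh u - 1))) u :=
    ((hasDerivAt_cosh u).pow s).mul (((hasDerivAt_sinh u).sub (hasDerivAt_id u)).pow k)
  convert h using 1
  simp only [coshSinh]
  ring

lemma iteratedDeriv_coshSinh_zero (m : ℕ) :
    ∀ s k, iteratedDeriv m (coshSinh s k) 0 = coshSinhDeriv s m k := by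
  induction m using Nat.strong_induction_on with
  | _ m ih =>
  intro s k
  rcases m with _ | m
  · rcases k with _ | k <;> simp [coshSinh, coshSinhDeriv, phiSum, phiN]
  · rw [iteratedDeriv_succ', funext fun u => (hasDerivAt_coshSinh s k u).deriv,
      iteratedDeriv_fun_sub (by fun_prop) (by fun_prop),
      iteratedDeriv_fun_add (by fun_prop) (by fun_prop),
      iteratedDeriv_fun_add (by fun_prop) (by fun_prop),
      iteratedDeriv_const_mul_field, iteratedDeriv_const_mul_field, iteratedDeriv_const_mul_field,
      iteratedDeriv_const_mul_field, iteratedDeriv_fun_id_mul_zero (by fun_prop),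
      ih m (by omega), ih m (by omega), ih m (by omega), ih (m - 1) (by omega),
      coshSinhDeriv_succ]
    push_cast
    ring

/-- `∑_{j=0}^n (s)_{n-j} · φ(n,j,0) = (1/(2n)!) · [ (cosh t ^ s)^{(2n)} ]_{t=0}`. -/
theorem stmt14 (s n : ℕ) :
    ∑ j ∈ Finset.range (n + 1),
        (s.descFactorial (n - j) : ℝ) * ((phi (n : ℤ) (j : ℤ) 0 : ℚ) : ℝ)
      = (1 / (Nat.factorial (2 * n) : ℝ))
          * iteratedDeriv (2 * n) (fun t : ℝ => Real.cosh t ^ s) 0 := by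
  have hcosh : (fun t : ℝ => cosh t ^ s) = coshSinh s 0 := by
    funext t
    simp [coshSinh]
  rw [hcosh, iteratedDeriv_coshSinh_zero, coshSinhDeriv_of_eq n (by ring), phiSum]
  have : ((2 * n) ! : ℝ) ≠ 0 := by positivity
  field_simp
  simp [phi, mul_comm]
end
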